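/- For every t > 0 and all x, z ∈ [0,1], the double integral ∫_z^1 ∫_0^x ρ_t(x′,y′) dx′ dy′ equals (1/t)·log( e^{xt}(e^t − 1) / (e^{(x+z)t} − e^{xt} − e^{zt} + e^t) ). -/

import Mathlib

/-- The limiting density `ρ_β` on `[0,1]²`. -/
noncomputable def rhoDen (β x y : ℝ) : ℝ :=
  if β = 0 then 1
  else (β / 2) * Real.sinh (β / 2) /
    (Real.exp (-β / 4) * Real.cosh (β * (x - y) / 2) -
      Real.exp (β / 4) * Real.cosh (β * (x + y - 1) / 2)) ^ 2

lemma rho_formula (t x y : ℝ) (ht : 0 < t) (hx : 0 ≤ x) (hy : 0 ≤ y) :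
    rhoDen t x y = t * (Real.exp t - 1) * Real.exp (t * (x + y)) /
      ((Real.exp t - 1) + (Real.exp (t * x) - 1) * (Real.exp (t * y) - 1)) ^ 2 := by
  have hA0 : 0 < Real.exp (t * x / 2) := Real.exp_pos _
  have hB0 : 0 < Real.exp (t * y / 2) := Real.exp_pos _
  have hC0 : 0 < Real.exp (t / 4) := Real.exp_pos _
  set A := Real.exp (t * x / 2) with hA
  set B := Real.exp (t * y / 2) with hB
  set C := Real.exp (t / 4) with hC
  have h1 : Real.exp (t * (x - y) / 2) = A / B := by
    rw [hA, hB, ← Real.exp_sub]; congr 1; ring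
  have h2 : Real.exp (-(t * (x - y) / 2)) = B / A := by
    rw [hA, hB, ← Real.exp_sub]; congr 1; ring
  have h3 : Real.exp (t * (x + y - 1) / 2) = A * B / C ^ 2 := by
    rw [hA, hB, hC, sq, ← Real.exp_add, ← Real.exp_add, ← Real.exp_sub]; congr 1; ring
  have h4 : Real.exp (-(t * (x + y - 1) / 2)) = C ^ 2 / (A * B) := by
    rw [hA, hB, hC, sq, ← Real.exp_add, ← Real.exp_add, ← Real.exp_sub]; congr 1; ring
  have h5 : Real.exp (-t / 4) = C⁻¹ := by
    rw [hC, ← Real.exp_neg]; congr 1; ring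
  have h6 : Real.exp (t / 2) = C ^ 2 := by
    rw [hC, sq, ← Real.exp_add]; congr 1; ring
  have h7 : Real.exp (-(t / 2)) = C⁻¹ ^ 2 := by
    rw [hC, sq, ← Real.exp_neg, ← Real.exp_add]; congr 1; ring
  have h8 : Real.exp t = C ^ 4 := by
    rw [hC, show (4:ℕ) = 2 + 2 from rfl, pow_add, sq, ← Real.exp_add, ← Real.exp_add]
    congr 1; ring
  have h9 : Real.exp (t * x) = A ^ 2 := by
    rw [hA, sq, ← Real.exp_add]; congr 1; ring
  have h10 : Real.exp (t * y) = B ^ 2 := by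
    rw [hB, sq, ← Real.exp_add]; congr 1; ring
  have h11 : Real.exp (t * (x + y)) = A ^ 2 * B ^ 2 := by
    rw [hA, hB, sq, sq, ← Real.exp_add, ← Real.exp_add, ← Real.exp_add]; congr 1; ring
  have hA1 : 1 ≤ A := by rw [hA]; exact Real.one_le_exp (by positivity)
  have hB1 : 1 ≤ B := by rw [hB]; exact Real.one_le_exp (by positivity)
  have hC1 : 1 < C ^ 4 := by
    rw [← h8]; simpa using Real.exp_lt_exp.mpr ht
  have hE : 0 < (C ^ 4 - 1) + (A ^ 2 - 1) * (B ^ 2 - 1) := by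
    have hp : 0 ≤ (A ^ 2 - 1) * (B ^ 2 - 1) :=
      mul_nonneg (by nlinarith) (by nlinarith)
    linarith
  have key : C⁻¹ * ((A / B + B / A) / 2) - C * ((A * B / C ^ 2 + C ^ 2 / (A * B)) / 2)
      = -((C ^ 4 - 1) + (A ^ 2 - 1) * (B ^ 2 - 1)) / (2 * C * A * B) := by
    field_simp
    ring
  rw [rhoDen, if_neg ht.ne', Real.cosh_eq, Real.cosh_eq, Real.sinh_eq,
    h1, h2, h3, h4, h5, h6, h7, h8, h9, h10, h11, key]
  rw [div_pow, neg_sq]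
  field_simp


lemma exp_deriv (t s : ℝ) :
    HasDerivAt (fun s : ℝ => Real.exp (t * s)) (t * Real.exp (t * s)) s := by
  have h := (Real.hasDerivAt_exp (t * s)).comp s ((hasDerivAt_id s).const_mul t)
  exact h.congr_deriv (by ring)

lemma E_pos (t : ℝ) (ht : 0 < t) {s y : ℝ} (hs : 0 ≤ s) (hy : 0 ≤ y) :
    0 < (Real.exp t - 1) + (Real.exp (t * s) - 1) * (Real.exp (t * y) - 1) := by
  have h1 : 1 ≤ Real.exp (t * s) := Real.one_le_exp (by positivity)
  have h2 : 1 ≤ Real.exp (t * y) := Real.one_le_exp (by positivity)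
  have h3 : 1 < Real.exp t := by simpa using Real.exp_lt_exp.mpr ht
  nlinarith

lemma inner_int (t x y : ℝ) (ht : 0 < t) (hx0 : 0 ≤ x) (hy : 0 ≤ y) :
    (∫ s in (0:ℝ)..x, rhoDen t s y) = (Real.exp (t * x) - 1) * Real.exp (t * y) /
      ((Real.exp t - 1) + (Real.exp (t * x) - 1) * (Real.exp (t * y) - 1)) := by
  have hcongr : Set.EqOn (fun s => rhoDen t s y)
      (fun s => t * (Real.exp t - 1) * Real.exp (t * (s + y)) /
        ((Real.exp t - 1) + (Real.exp (t * s) - 1) * (Real.exp (t * y) - 1)) ^ 2)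
      (Set.uIcc (0:ℝ) x) := by
    intro s hs
    rw [Set.uIcc_of_le hx0] at hs
    exact rho_formula t s y ht hs.1 hy
  have key : ∀ s ∈ Set.uIcc (0:ℝ) x, HasDerivAt
      (fun s => (Real.exp (t * s) - 1) * Real.exp (t * y) /
        ((Real.exp t - 1) + (Real.exp (t * s) - 1) * (Real.exp (t * y) - 1)))
      (t * (Real.exp t - 1) * Real.exp (t * (s + y)) /
        ((Real.exp t - 1) + (Real.exp (t * s) - 1) * (Real.exp (t * y) - 1)) ^ 2) s := by
    intro s hs
    rw [Set.uIcc_of_le hx0] at hs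
    have hE := E_pos t ht hs.1 hy
    have h1 : HasDerivAt (fun s => (Real.exp (t * s) - 1) * Real.exp (t * y))
        (t * Real.exp (t * s) * Real.exp (t * y)) s :=
      ((exp_deriv t s).sub_const 1).mul_const _
    have h2 : HasDerivAt
        (fun s => (Real.exp t - 1) + (Real.exp (t * s) - 1) * (Real.exp (t * y) - 1))
        (t * Real.exp (t * s) * (Real.exp (t * y) - 1)) s :=
      (((exp_deriv t s).sub_const 1).mul_const _).const_add _
    have h3 := h1.div h2 hE.ne'
    refine h3.congr_deriv ?_
    rw [show t * (s + y) = t * s + t * y by ring, Real.exp_add]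
    field_simp
    ring
  have hint : IntervalIntegrable
      (fun s => t * (Real.exp t - 1) * Real.exp (t * (s + y)) /
        ((Real.exp t - 1) + (Real.exp (t * s) - 1) * (Real.exp (t * y) - 1)) ^ 2)
      MeasureTheory.volume 0 x := by
    apply ContinuousOn.intervalIntegrable
    apply ContinuousOn.div (by fun_prop) (by fun_prop)
    intro s hs
    rw [Set.uIcc_of_le hx0] at hs
    exact pow_ne_zero _ (E_pos t ht hs.1 hy).ne'
  rw [intervalIntegral.integral_congr hcongr,
    intervalIntegral.integral_eq_sub_of_hasDerivAt key hint]
  simp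


theorem stmt9 (t : ℝ) (ht : 0 < t) (x z : ℝ)
    (hx : x ∈ Set.Icc (0 : ℝ) 1) (hz : z ∈ Set.Icc (0 : ℝ) 1) :
    (∫ y' in z..1, ∫ x' in (0 : ℝ)..x, rhoDen t x' y') =
      (1 / t) * Real.log (Real.exp (x * t) * (Real.exp t - 1) /
        (Real.exp ((x + z) * t) - Real.exp (x * t) - Real.exp (z * t) + Real.exp t)) := by
  obtain ⟨hx0, hx1⟩ := hx
  obtain ⟨hz0, hz1⟩ := hz
  have hcongr : Set.EqOn (fun y' => ∫ x' in (0:ℝ)..x, rhoDen t x' y')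
      (fun y' => (Real.exp (t * x) - 1) * Real.exp (t * y') /
        ((Real.exp t - 1) + (Real.exp (t * x) - 1) * (Real.exp (t * y') - 1)))
      (Set.uIcc z 1) := by
    intro y' hy'
    rw [Set.uIcc_of_le hz1] at hy'
    exact inner_int t x y' ht hx0 (le_trans hz0 hy'.1)
  have key : ∀ y' ∈ Set.uIcc z 1, HasDerivAt
      (fun y' => (1 / t) * Real.log
        ((Real.exp t - 1) + (Real.exp (t * x) - 1) * (Real.exp (t * y') - 1)))
      ((Real.exp (t * x) - 1) * Real.exp (t * y') /
        ((Real.exp t - 1) + (Real.exp (t * x) - 1) * (Real.exp (t * y') - 1))) y' := by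
    intro y' hy'
    rw [Set.uIcc_of_le hz1] at hy'
    have hy'0 : 0 ≤ y' := le_trans hz0 hy'.1
    have hE := E_pos t ht hx0 hy'0
    have h2 : HasDerivAt
        (fun y' => (Real.exp t - 1) + (Real.exp (t * x) - 1) * (Real.exp (t * y') - 1))
        ((Real.exp (t * x) - 1) * (t * Real.exp (t * y'))) y' :=
      (((exp_deriv t y').sub_const 1).const_mul _).const_add _
    have h3 := (h2.log hE.ne').const_mul (1 / t)
    refine h3.congr_deriv ?_
    field_simp
  have hint : IntervalIntegrable
      (fun y' => (Real.exp (t * x) - 1) * Real.exp (t * y') /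
        ((Real.exp t - 1) + (Real.exp (t * x) - 1) * (Real.exp (t * y') - 1)))
      MeasureTheory.volume z 1 := by
    apply ContinuousOn.intervalIntegrable
    apply ContinuousOn.div (by fun_prop) (by fun_prop)
    intro y' hy'
    rw [Set.uIcc_of_le hz1] at hy'
    exact (E_pos t ht hx0 (le_trans hz0 hy'.1)).ne'
  rw [intervalIntegral.integral_congr hcongr,
    intervalIntegral.integral_eq_sub_of_hasDerivAt key hint]
  have hE1 : (Real.exp t - 1) + (Real.exp (t * x) - 1) * (Real.exp (t * 1) - 1)
      = Real.exp (x * t) * (Real.exp t - 1) := by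
    rw [mul_one, show x * t = t * x by ring]; ring
  have hEz : (Real.exp t - 1) + (Real.exp (t * x) - 1) * (Real.exp (t * z) - 1)
      = Real.exp ((x + z) * t) - Real.exp (x * t) - Real.exp (z * t) + Real.exp t := by
    rw [show (x + z) * t = t * x + t * z by ring, Real.exp_add,
      show x * t = t * x by ring, show z * t = t * z by ring]
    ring
  have hE10 := E_pos t ht hx0 (zero_le_one)
  have hEz0 := E_pos t ht hx0 hz0
  rw [hE1] at hE10
  rw [hEz] at hEz0
  rw [hE1, hEz, ← mul_sub, ← Real.log_div hE10.ne' hEz0.ne']
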